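/- Let H : E → ℝ be smooth and let ζ₁, ζ₂ be smooth vector fields on E with L_{ζ₁} α_H = 0, L_{ζ₂} α_H = 0, and [ζ₁, ζ₂] = 0. Set J₂(x) = α_H(x)(ζ₂(x)). Then ζ₁(J₂) = 0, i.e., dJ₂(x)(ζ₁(x)) = 0 for all x ∈ E. -/

import Mathlib

noncomputable section
open scoped ContDiff

/-- The extended phase space `E = ℝ × ℝⁿ × ℝⁿ`, with points `x = (t, q, p)`. -/
abbrev EE (n : ℕ) : Type := ℝ × (Fin n → ℝ) × (Fin n → ℝ)

/-- The Poincaré–Cartan 1-form `α_H = p dq − H dt`: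
`α_H(x)(τ̂, ξ̂, η̂) = ∑ i, pᵢ ξ̂ᵢ − H(x) τ̂`. -/
def pcForm {n : ℕ} (H : EE n → ℝ) (x : EE n) : EE n →L[ℝ] ℝ :=
  (∑ i, x.2.2 i • ((ContinuousLinearMap.proj i).comp
      ((ContinuousLinearMap.fst ℝ (Fin n → ℝ) (Fin n → ℝ)).comp
        (ContinuousLinearMap.snd ℝ ℝ ((Fin n → ℝ) × (Fin n → ℝ))))))
    - H x • ContinuousLinearMap.fst ℝ ℝ ((Fin n → ℝ) × (Fin n → ℝ))

/-- The vector field `Z_H(x) = (1, ∂H/∂p(x), −∂H/∂q(x))` of Hamilton's equations. -/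
def ZH {n : ℕ} (H : EE n → ℝ) (x : EE n) : EE n :=
  (1, fun i => fderiv ℝ H x (0, 0, Pi.single i 1),
      fun i => - fderiv ℝ H x (0, Pi.single i 1, 0))

/-- The Lie derivative of a 1-form `α` along a vector field `ζ`:
`(L_ζ α)(x)(v) = (Dα(x)(ζ(x)))(v) + α(x)(Dζ(x)(v))`. -/
def lieDeriv {n : ℕ} (ζ : EE n → EE n) (α : EE n → (EE n →L[ℝ] ℝ)) (x : EE n) :
    EE n →L[ℝ] ℝ :=
  fderiv ℝ α x (ζ x) + (α x).comp (fderiv ℝ ζ x)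

/-- The exterior derivative of a 1-form:
`dα(x)(u,v) = (Dα(x)u)(v) − (Dα(x)v)(u)`. -/
def extDerivEE {n : ℕ} (α : EE n → (EE n →L[ℝ] ℝ)) (x u v : EE n) : ℝ :=
  fderiv ℝ α x u v - fderiv ℝ α x v u

/-- The Lie bracket of vector fields: `[X,Y](x) = DY(x)(X(x)) − DX(x)(Y(x))`. -/
def vbracket {n : ℕ} (X Y : EE n → EE n) (x : EE n) : EE n :=
  fderiv ℝ Y x (X x) - fderiv ℝ X x (Y x)

/-! The Leibniz rule gives `ζ₁(α(ζ₂)) = (L_{ζ₁} α)(ζ₂) + α([ζ₁, ζ₂])` for any 1-form `α` and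
vector fields `ζ₁, ζ₂`. For `α = α_H` both terms on the right vanish when `ζ₁` is a symmetry
of `α_H` commuting with `ζ₂`. -/

theorem differentiable_pcForm {n : ℕ} {H : EE n → ℝ} (hH : Differentiable ℝ H) :
    Differentiable ℝ (pcForm H) := by
  unfold pcForm
  fun_prop

theorem fderiv_apply_eq_lieDeriv_add_vbracket {n : ℕ} {α : EE n → (EE n →L[ℝ] ℝ)}
    {ζ₁ ζ₂ : EE n → EE n} {x : EE n} (hα : DifferentiableAt ℝ α x)
    (hζ₂ : DifferentiableAt ℝ ζ₂ x) :
    fderiv ℝ (fun y => α y (ζ₂ y)) x (ζ₁ x) =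
      lieDeriv ζ₁ α x (ζ₂ x) + α x (vbracket ζ₁ ζ₂ x) := by
  rw [(hα.hasFDerivAt.clm_apply hζ₂.hasFDerivAt).fderiv]
  simp only [lieDeriv, vbracket, add_apply, ContinuousLinearMap.comp_apply,
    ContinuousLinearMap.flip_apply, map_sub]
  ring

theorem symmetry_preserves_other_integral {n : ℕ}
    (H : EE n → ℝ) (hH : ContDiff ℝ ∞ H)
    (ζ₁ ζ₂ : EE n → EE n) (hζ₂ : ContDiff ℝ ∞ ζ₂)
    (hsym₁ : ∀ x, lieDeriv ζ₁ (pcForm H) x = 0)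
    (hcomm : ∀ x, vbracket ζ₁ ζ₂ x = 0) :
    ∀ x, fderiv ℝ (fun y => pcForm H y (ζ₂ y)) x (ζ₁ x) = 0 := by
  intro x
  have hα := differentiable_pcForm (hH.differentiable (by simp)) x
  rw [fderiv_apply_eq_lieDeriv_add_vbracket hα ((hζ₂.differentiable (by simp)) x), hsym₁,
    hcomm]
  simp
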